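/- arXiv:1303.1862 — 4 statements merged into one kernel-verified Lean document; each statement's English description precedes it below -/
import Mathlib

section
/- With the setup of the previous statement (f, ξ orthonormal, f̌ ⊥ f, ξ, μ² = (f̌,f̌), a = 1 - 2/(τ²+μ²+1), b = -2τ/(τ²+μ²+1), f̂ = a f + b ξ + (1-a) f̌), define ξ̂ := ξ - τ f + τ f̂. Then (f̂, ξ̂) = 0. -/
open RealInnerProductSpace

/-- In the Ribaucour parametrization, `f̂` is orthogonal to `ξ̂ = ξ - τf + τf̂`. -/
theorem ribaucour_fhat_xihat_orthogonal {V : Type*} [NormedAddCommGroup V] [InnerProductSpace ℝ V]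
    (f ξ fc : V) (τ : ℝ)
    (hf : ⟪f, f⟫ = 1) (hξ : ⟪ξ, ξ⟫ = 1) (hfξ : ⟪f, ξ⟫ = 0)
    (hcf : ⟪fc, f⟫ = 0) (hcξ : ⟪fc, ξ⟫ = 0)
    (μ2 : ℝ) (hμ2 : μ2 = ⟪fc, fc⟫)
    (a b : ℝ) (ha : a = 1 - 2 / (τ ^ 2 + μ2 + 1)) (hb : b = -2 * τ / (τ ^ 2 + μ2 + 1))
    (fh : V) (hfh : fh = a • f + b • ξ + (1 - a) • fc)
    (ξh : V) (hξh : ξh = ξ - τ • f + τ • fh) :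
    ⟪fh, ξh⟫ = 0 := by
  have hξf : ⟪ξ, f⟫ = 0 := by rw [real_inner_comm]; exact hfξ
  have hfc : ⟪f, fc⟫ = 0 := by rw [real_inner_comm]; exact hcf
  have hξc : ⟪ξ, fc⟫ = 0 := by rw [real_inner_comm]; exact hcξ
  have hμ : (0:ℝ) ≤ μ2 := hμ2 ▸ real_inner_self_nonneg
  have hD : τ ^ 2 + μ2 + 1 ≠ 0 := by positivity
  subst hfh hξh
  simp only [inner_add_left, inner_add_right, inner_sub_right, inner_smul_left, inner_smul_right,
    hf, hξ, hfξ, hξf, hcf, hcξ, hfc, hξc, ← hμ2, RCLike.conj_to_real]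
  subst ha hb
  field_simp
  ring
end

section
/- In the Ribaucour setup (f, ξ orthonormal, f̌ ⊥ f,ξ with (f̌,f̌)=μ², a = 1-2/(τ²+μ²+1), f̂ = a f + τ(a-1) ξ + (1-a) f̌, ξ̂ = ξ - τ f + τ f̂), define f̌̂ := f̌ + μ²(f - f̂). Then f̌̂ is orthogonal to both f̂ and ξ̂, and (f̌̂, f̌̂) = μ², i.e., f̌̂ has the same squared length μ² as f̌. -/
/-!
With `w := f̌ - f - τ ξ` one has `(w, w) = τ² + μ² + 1`, `(w, f) = -1`, `(w, ξ) = -τ` and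
`(w, f̌) = μ²`, so `f̂`, `ξ̂` and `f̌̂` are the images of `f`, `ξ` and `f̌` under the reflection in
the hyperplane `w^⊥`. A reflection is an isometry, hence the three inner products are those of
`f̌` with `f`, `ξ` and itself.
-/

open RealInnerProductSpace

theorem Submodule.reflection_orthogonal_singleton_apply {V : Type*} [NormedAddCommGroup V]
    [InnerProductSpace ℝ V] (w x : V) :
    (ℝ ∙ w)ᗮ.reflection x = x - (2 * ⟪w, x⟫ / ⟪w, w⟫) • w := by
  rw [reflection_orthogonal_apply, reflection_singleton_apply, real_inner_self_eq_norm_sq]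
  module

/-- `f̌̂ := f̌ + μ²(f - f̂)` is orthogonal to `f̂` and `ξ̂`, and has the same
squared length `μ²` as `f̌`. -/
theorem ribaucour_fcheckhat {V : Type*} [NormedAddCommGroup V] [InnerProductSpace ℝ V]
    (f ξ fc : V) (τ : ℝ)
    (hf : ⟪f, f⟫ = 1) (hξ : ⟪ξ, ξ⟫ = 1) (hfξ : ⟪f, ξ⟫ = 0)
    (hcf : ⟪fc, f⟫ = 0) (hcξ : ⟪fc, ξ⟫ = 0)
    (μ2 : ℝ) (hμ2 : μ2 = ⟪fc, fc⟫)
    (a : ℝ) (ha : a = 1 - 2 / (τ ^ 2 + μ2 + 1))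
    (fh : V) (hfh : fh = a • f + (τ * (a - 1)) • ξ + (1 - a) • fc)
    (ξh : V) (hξh : ξh = ξ - τ • f + τ • fh)
    (fch : V) (hfch : fch = fc + μ2 • (f - fh)) :
    ⟪fch, fh⟫ = 0 ∧ ⟪fch, ξh⟫ = 0 ∧ ⟪fch, fch⟫ = μ2 := by
  set w := fc - f - τ • ξ
  set R := (ℝ ∙ w)ᗮ.reflection
  have hR (x : V) : R x = x - (2 * ⟪w, x⟫ / ⟪w, w⟫) • w :=
    Submodule.reflection_orthogonal_singleton_apply w x
  have hw (x : V) : ⟪w, x⟫ = ⟪fc, x⟫ - ⟪f, x⟫ - τ * ⟪ξ, x⟫ := by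
    simp only [w, inner_sub_left, real_inner_smul_left]
  have hwf : ⟪w, f⟫ = -1 := by
    rw [hw, hcf, hf, real_inner_comm f ξ, hfξ]; ring
  have hwξ : ⟪w, ξ⟫ = -τ := by
    rw [hw, hcξ, hfξ, hξ]; ring
  have hwc : ⟪w, fc⟫ = μ2 := by
    rw [hw, ← hμ2, real_inner_comm fc f, hcf, real_inner_comm fc ξ, hcξ]; ring
  have hww : ⟪w, w⟫ = τ ^ 2 + μ2 + 1 := by
    rw [hw, real_inner_comm w fc, real_inner_comm w f, real_inner_comm w ξ, hwc, hwf, hwξ]; ring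
  have hRf : R f = fh := by
    rw [hR, hwf, hww, hfh, ha]; module
  have hRξ : R ξ = ξh := by
    rw [hR, hwξ, hww, hξh, ← hRf, hR, hwf, hww]; module
  have hRc : R fc = fch := by
    rw [hR, hwc, hww, hfch, ← hRf, hR, hwf, hww]; module
  simp only [← hRf, ← hRξ, ← hRc, LinearIsometryEquiv.inner_map_map]
  exact ⟨hcf, hcξ, hμ2.symm⟩
end

section
/- In the Ribaucour setup, applying the inverse construction to (f̂, ξ̂) with the same τ and with f̌̂ := f̌ + μ²(f - f̂) recovers f: that is, â f̂ + τ(â - 1) ξ̂ + (1 - â) f̌̂ = f, where â := 1 - 2/(τ² + μ̂² + 1) and μ̂² := (f̌̂, f̌̂) = μ². -/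
open RealInnerProductSpace

/-- applying the inverse Ribaucour construction to `(f̂, ξ̂)` with the same `τ` and
with `f̌̂ = f̌ + μ²(f - f̂)` recovers `f`:  `â f̂ + τ(â-1) ξ̂ + (1-â) f̌̂ = f`,
where `â = 1 - 2/(τ² + μ̂² + 1)` and `μ̂² = (f̌̂, f̌̂)`. -/
theorem ribaucour_involutive {V : Type*} [NormedAddCommGroup V] [InnerProductSpace ℝ V]
    (f ξ fc : V) (τ : ℝ)
    (hf : ⟪f, f⟫ = 1) (hξ : ⟪ξ, ξ⟫ = 1) (hfξ : ⟪f, ξ⟫ = 0)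
    (hcf : ⟪fc, f⟫ = 0) (hcξ : ⟪fc, ξ⟫ = 0)
    (μ2 : ℝ) (hμ2 : μ2 = ⟪fc, fc⟫)
    (a : ℝ) (ha : a = 1 - 2 / (τ ^ 2 + μ2 + 1))
    (fh : V) (hfh : fh = a • f + (τ * (a - 1)) • ξ + (1 - a) • fc)
    (ξh : V) (hξh : ξh = ξ - τ • f + τ • fh)
    (fch : V) (hfch : fch = fc + μ2 • (f - fh))
    (μ2h : ℝ) (hμ2h : μ2h = ⟪fch, fch⟫)
    (ah : ℝ) (hah : ah = 1 - 2 / (τ ^ 2 + μ2h + 1)) :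
    μ2h = μ2 ∧ ah • fh + (τ * (ah - 1)) • ξh + (1 - ah) • fch = f := by
  have hμpos : 0 ≤ μ2 := hμ2 ▸ real_inner_self_nonneg
  have hs : τ ^ 2 + μ2 + 1 ≠ 0 := by positivity
  have hcf' : ⟪f, fc⟫ = 0 := by rw [real_inner_comm]; exact hcf
  have hcξ' : ⟪ξ, fc⟫ = 0 := by rw [real_inner_comm]; exact hcξ
  have hξf : ⟪ξ, f⟫ = 0 := by rw [real_inner_comm]; exact hfξ
  have key : μ2h = μ2 := by
    subst hμ2h hfch hfh ha
    simp only [smul_sub, inner_add_add_self, inner_sub_sub_self, real_inner_smul_left,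
      real_inner_smul_right, inner_add_left, inner_add_right, inner_sub_left, inner_sub_right,
      hf, hξ, hfξ, hξf, hcf, hcξ, hcf', hcξ', ← hμ2]
    field_simp
    ring
  refine ⟨key, ?_⟩
  have hah' : ah = a := by rw [hah, key, ha]
  subst hah' hξh hfch hfh
  match_scalars <;> (rw [ha]; field_simp; ring)
end

section
/- In the Ribaucour setup, the curvature form of the rank-2 subbundle ⟨f+t₀, f̂+t₀⟩ equals (1-a)·dα_τ; hence the bundle ⟨f+t₀, f̂+t₀⟩ with the induced connection is flat if and only if dα_τ = 0. -/
open RealInnerProductSpace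

/-- The signature `(m+2,2)` bilinear form on `ℝ^{m+2} ⊕ ⟨t₀,t₁⟩`. -/
noncomputable def lieForm (m : ℕ) (v w : EuclideanSpace ℝ (Fin (m + 2)) × ℝ × ℝ) : ℝ :=
  ⟪v.1, w.1⟫ - v.2.1 * w.2.1 - v.2.2 * w.2.2

/-- the curvature form of the rank-2 bundle `⟨f+t₀, f̂+t₀⟩`, namely
`(β(f+t₀) ∧ β(f̂+t₀))` with `β(f+t₀) = df - (f+t₀)α_τ`, `β(f̂+t₀) = df̂ - (f̂+t₀)α̂_τ`,
equals `(1-a)·dα_τ`; hence the bundle is flat iff `dα_τ = 0`. -/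
theorem curvature_eq_dalpha {m : ℕ} {E : Type*}
    [NormedAddCommGroup E] [NormedSpace ℝ E]
    (f fh : E → EuclideanSpace ℝ (Fin (m + 2)))
    (hf : ContDiff ℝ (⊤ : ℕ∞) f) (hfh : ContDiff ℝ (⊤ : ℕ∞) fh)
    (hfu : ∀ p, ⟪f p, f p⟫ = 1) (hfhu : ∀ p, ⟪fh p, fh p⟫ = 1)
    (a : E → ℝ) (hadef : ∀ p, a p = ⟪f p, fh p⟫) (ha1 : ∀ p, a p < 1)
    (α αh : E → E →L[ℝ] ℝ)
    (hα : ContDiff ℝ (⊤ : ℕ∞) α) (hαh : ContDiff ℝ (⊤ : ℕ∞) αh)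
    (hαdef : ∀ p X, α p X = (a p - 1)⁻¹ * ⟪fderiv ℝ f p X, fh p⟫)
    (hαhdef : ∀ p X, αh p X = (a p - 1)⁻¹ * ⟪fderiv ℝ fh p X, f p⟫)
    -- the second fundamental forms `β(f+t₀) = df - (f+t₀)α_τ`, `β(f̂+t₀) = df̂ - (f̂+t₀)α̂_τ`
    (βf βfh : E → E → EuclideanSpace ℝ (Fin (m + 2)) × ℝ × ℝ)
    (hβf : ∀ p X, βf p X = (fderiv ℝ f p X, (0 : ℝ), (0 : ℝ)) - α p X • (f p, (1 : ℝ), (0 : ℝ)))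
    (hβfh : ∀ p X, βfh p X =
      (fderiv ℝ fh p X, (0 : ℝ), (0 : ℝ)) - αh p X • (fh p, (1 : ℝ), (0 : ℝ))) :
    (∀ p X Y, lieForm m (βf p X) (βfh p Y) - lieForm m (βf p Y) (βfh p X)
        = (1 - a p) * (fderiv ℝ α p X Y - fderiv ℝ α p Y X)) ∧
    ((∀ p X Y, lieForm m (βf p X) (βfh p Y) - lieForm m (βf p Y) (βfh p X) = 0) ↔
      (∀ p X Y, fderiv ℝ α p X Y = fderiv ℝ α p Y X)) := by
  have hfd := hf.differentiable (by simp)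
  have hfhd := hfh.differentiable (by simp)
  have hαd := hα.differentiable (by simp)
  have hfinf : ContDiff ℝ (↑(⊤ : ℕ∞)) f := hf.of_le (by simp)
  have hf'c := (contDiff_infty_iff_fderiv.mp hfinf).2
  have hf'd : Differentiable ℝ (fderiv ℝ f) := hf'c.differentiable (by simp)
  have key : ∀ p X Y, lieForm m (βf p X) (βfh p Y) - lieForm m (βf p Y) (βfh p X)
      = (1 - a p) * (fderiv ℝ α p X Y - fderiv ℝ α p Y X) := by
    intro p X Y
    have hs : ∀ q, a q - 1 ≠ 0 := fun q => sub_ne_zero.mpr (ne_of_lt (ha1 q))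
    have hF : ∀ q Z, ⟪fderiv ℝ f q Z, fh q⟫ = (a q - 1) * α q Z := by
      intro q Z; rw [hαdef q Z, ← mul_assoc, mul_inv_cancel₀ (hs q), one_mul]
    have hFh : ∀ Z, ⟪fderiv ℝ fh p Z, f p⟫ = (a p - 1) * αh p Z := by
      intro Z; rw [hαhdef p Z, ← mul_assoc, mul_inv_cancel₀ (hs p), one_mul]
    -- the algebraic expansion of the Lie form
    have hL : ∀ X Y, lieForm m (βf p X) (βfh p Y)
        = ⟪fderiv ℝ f p X, fderiv ℝ fh p Y⟫ + (1 - a p) * (α p X * αh p Y) := by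
      intro X Y
      have h1 : ⟪f p, fderiv ℝ fh p Y⟫ = (a p - 1) * αh p Y := by
        rw [real_inner_comm]; exact hFh Y
      simp only [hβf, hβfh, lieForm, Prod.fst_sub, Prod.snd_sub, Prod.smul_fst, Prod.smul_snd,
        smul_eq_mul, inner_sub_left, inner_sub_right, real_inner_smul_left,
        real_inner_smul_right, mul_one, mul_zero, zero_sub, sub_zero]
      rw [hF p X, h1, ← hadef p]
      ring
    -- differentiate the identity (a q - 1) * α q Z = ⟪fderiv f q Z, fh q⟫
    have hD : ∀ X Y,
        (⟪f p, fderiv ℝ fh p X⟫ + ⟪fderiv ℝ f p X, fh p⟫) * α p Y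
          + (⟪f p, fh p⟫ - 1) * fderiv ℝ α p X Y
        = ⟪fderiv ℝ f p Y, fderiv ℝ fh p X⟫ + ⟪fderiv ℝ (fderiv ℝ f) p X Y, fh p⟫ := by
      intro X Y
      have h1 : HasFDerivAt (fun q => ⟪f q, fh q⟫ - 1)
          ((fderivInnerCLM ℝ (f p, fh p)).comp ((fderiv ℝ f p).prod (fderiv ℝ fh p))) p :=
        ((hfd p).hasFDerivAt.inner ℝ (hfhd p).hasFDerivAt).sub_const 1
      have h2 : HasFDerivAt (fun q => α q Y)
          ((ContinuousLinearMap.apply ℝ ℝ Y).comp (fderiv ℝ α p)) p :=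
        (ContinuousLinearMap.apply ℝ ℝ Y).hasFDerivAt.comp p (hαd p).hasFDerivAt
      have h12 : HasFDerivAt (fun q => (⟪f q, fh q⟫ - 1) * α q Y) _ p := h1.mul h2
      have h3 : HasFDerivAt (fun q => fderiv ℝ f q Y)
          ((ContinuousLinearMap.apply ℝ (EuclideanSpace ℝ (Fin (m + 2))) Y).comp
            (fderiv ℝ (fderiv ℝ f) p)) p :=
        (ContinuousLinearMap.apply ℝ (EuclideanSpace ℝ (Fin (m + 2))) Y).hasFDerivAt.comp p
          (hf'd p).hasFDerivAt
      have h5 : HasFDerivAt (fun q => ⟪fderiv ℝ f q Y, fh q⟫)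
          ((fderivInnerCLM ℝ (fderiv ℝ f p Y, fh p)).comp
            (((ContinuousLinearMap.apply ℝ (EuclideanSpace ℝ (Fin (m + 2))) Y).comp
              (fderiv ℝ (fderiv ℝ f) p)).prod (fderiv ℝ fh p))) p :=
        h3.inner ℝ (hfhd p).hasFDerivAt
      have hfun : (fun q => (⟪f q, fh q⟫ - 1) * α q Y)
          = fun q => ⟪fderiv ℝ f q Y, fh q⟫ := by
        funext q
        rw [hF q Y, ← hadef q]
      rw [hfun] at h12
      have := h12.unique h5
      have happ := ContinuousLinearMap.ext_iff.mp this X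
      simp only [ContinuousLinearMap.comp_apply, ContinuousLinearMap.add_apply,
        ContinuousLinearMap.coe_smul', Pi.smul_apply, ContinuousLinearMap.prod_apply,
        ContinuousLinearMap.apply_apply, fderivInnerCLM_apply, smul_eq_mul] at happ
      linear_combination happ
    -- symmetry of the second derivative
    have hsym : fderiv ℝ (fderiv ℝ f) p X Y = fderiv ℝ (fderiv ℝ f) p Y X :=
      second_derivative_symmetric (fun y => (hfd y).hasFDerivAt) (hf'd p).hasFDerivAt X Y
    have hsym' : ⟪fderiv ℝ (fderiv ℝ f) p X Y, fh p⟫ = ⟪fderiv ℝ (fderiv ℝ f) p Y X, fh p⟫ := by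
      rw [hsym]
    have e1 := hD X Y
    have e2 := hD Y X
    have hcX : ⟪f p, fderiv ℝ fh p X⟫ = (a p - 1) * αh p X := by
      rw [real_inner_comm]; exact hFh X
    have hcY : ⟪f p, fderiv ℝ fh p Y⟫ = (a p - 1) * αh p Y := by
      rw [real_inner_comm]; exact hFh Y
    rw [hcX, hF p X, ← hadef p, hsym'] at e1
    rw [hcY, hF p Y, ← hadef p] at e2
    rw [hL X Y, hL Y X]
    linarith [e1, e2, mul_comm (α p X) (αh p Y), mul_comm (α p Y) (αh p X)]
  refine ⟨key, ?_, ?_⟩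
  · intro h p X Y
    have hk := key p X Y
    rw [h p X Y] at hk
    have hne : (1 - a p) ≠ 0 := sub_ne_zero.mpr (ne_of_gt (by linarith [ha1 p]))
    have := (mul_eq_zero.mp hk.symm).resolve_left hne
    linarith
  · intro h p X Y
    rw [key p X Y, h p X Y]
    ring
end
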